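/- Two quorums of size N - u each over N nodes with at most f_safe Byzantine nodes intersect in at least f_safe + 1 nodes whenever N ≥ 2u + f_safe + 1; hence at least one correct node belongs to both, so two auditQCs formed in the same view cannot certify conflicting batches (since a correct node votes for at most one branch per view). -/

import Mathlib

/-!
Two quorums of size at least `N - u` overlap in at least `N - 2u ≥ f_safe + 1` nodes, more than
the Byzantine nodes can account for, so some correct node voted for both batches; as it votes
for at most one of two conflicting batches, the batches do not conflict.
-/

open Finset

theorem Finset.card_add_card_le_card_inter_add_card_univ {α : Type*} [Fintype α] [DecidableEq α]
    (s t : Finset α) : #s + #t ≤ #(s ∩ t) + Fintype.card α := by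
  rw [← card_union_add_card_inter, add_comm]
  exact Nat.add_le_add_left (card_le_univ _) _

theorem Finset.lt_card_inter_of_card_sub_le {α : Type*} [Fintype α] [DecidableEq α] {u f : ℕ}
    (hα : 2 * u + f + 1 ≤ Fintype.card α) {s t : Finset α}
    (hs : Fintype.card α - u ≤ #s) (ht : Fintype.card α - u ≤ #t) : f < #(s ∩ t) := by
  have := card_add_card_le_card_inter_add_card_univ s t
  omega

/-- Two quorums of size `N - u` over `N` nodes with at most `f_safe` Byzantine nodes
intersect in at least `f_safe + 1` nodes whenever `N ≥ 2u + f_safe + 1`; hence a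
correct node belongs to both quorums, and since correct nodes vote for at most one of
two conflicting branches in a view, two auditQCs formed in the same view cannot
certify conflicting batches (branches are modeled as lists, extension as the prefix
relation). -/
theorem no_conflicting_auditQCs_same_view
    {β : Type} (N u f_safe : ℕ) (hN : N ≥ 2 * u + f_safe + 1)
    (B : Finset (Fin N)) (hB : B.card ≤ f_safe)
    (voted : Fin N → List β → Prop)
    (hcorrect : ∀ n, n ∉ B → ∀ l1 l2 : List β,
      voted n l1 → voted n l2 → l1 <+: l2 ∨ l2 <+: l1)
    (Q1 Q2 : Finset (Fin N)) (l1 l2 : List β)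
    (hQ1 : Q1.card ≥ N - u) (hQ2 : Q2.card ≥ N - u)
    (hv1 : ∀ n ∈ Q1, voted n l1) (hv2 : ∀ n ∈ Q2, voted n l2) :
    (Q1 ∩ Q2).card ≥ f_safe + 1 ∧ (l1 <+: l2 ∨ l2 <+: l1) := by
  have hinter : f_safe < #(Q1 ∩ Q2) :=
    lt_card_inter_of_card_sub_le (by rwa [Fintype.card_fin]) (by rwa [Fintype.card_fin])
      (by rwa [Fintype.card_fin])
  refine ⟨hinter, ?_⟩
  obtain ⟨n, hn, hnB⟩ := exists_mem_notMem_of_card_lt_card (hB.trans_lt hinter)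
  rw [mem_inter] at hn
  exact hcorrect n hnB l1 l2 (hv1 n hn.1) (hv2 n hn.2)
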